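/- Let γ : ℤ → ℂ be a sequence with Σ_{j∈ℤ} |γ_j| < ∞. Then there exist unique families (A_{+,j}, B_{+,j})_{j∈ℤ} and (A_{-,j}, B_{-,j})_{j∈ℤ} of functions on S¹ satisfying the recursions [A_{+,j}; B_{+,j}] = (1+|γ_j|²)^{-1/2} · [[1, −γ_j w^{−1}], [γ_j*, w^{−1}]] · [A_{+,j+1}; B_{+,j+1}] and [A_{-,j+1}; B_{-,j+1}] = (1+|γ_j|²)^{-1/2} · [[1, γ_j], [−γ_j* w, w]] · [A_{-,j}; B_{-,j}], together with the normalizations (A_{+,j}(w), B_{+,j}(w)) → (1, 0) as j → +∞ and (A_{-,j}(w), B_{-,j}(w)) → (1, 0) as j → −∞, for every w ∈ S¹. Furthermore, for each integer j, the functions A_{-,j}, w^{−1}B_{-,j}, A_{+,j}*, and B_{+,j}* all lie in H̃₊(S¹). -/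

import Mathlib

open MeasureTheory Complex Filter Metric Topology ComplexConjugate

noncomputable section

/-- The restriction of `f : ℂ → ℂ` to the unit circle, as a function of the angle. -/
def onCircle (f : ℂ → ℂ) : ℝ → ℂ := fun θ => f (Complex.exp ((θ : ℂ) * Complex.I))

/-- The measure on angles defining `L²(S¹)`. -/
def circleMeasure : Measure ℝ := volume.restrict (Set.Ioc 0 (2 * Real.pi))

/-- The `n`-th Fourier coefficient `f̂(n) = (1/2π)∫₀^{2π} f(e^{iθ}) e^{-inθ} dθ`. -/
def fc (f : ℂ → ℂ) (n : ℤ) : ℂ :=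
  (1 / (2 * Real.pi) : ℝ) • ∫ θ in (0:ℝ)..(2 * Real.pi),
    onCircle f θ * Complex.exp (-((n : ℂ) * (θ : ℂ)) * Complex.I)

/-- membership in `L²(S¹)` -/
def MemL2C (f : ℂ → ℂ) : Prop := MemLp (onCircle f) 2 circleMeasure

/-- membership in the Hardy space `H̃₊(S¹)` -/
def MemHplusC (f : ℂ → ℂ) : Prop := MemL2C f ∧ ∀ n : ℤ, n < 0 → fc f n = 0

/-- the squared `H¹(S¹)`-norm, computed via Fourier coefficients -/
def H1SqC (f : ℂ → ℂ) : ℝ := ∑' n : ℤ, (1 + (n : ℝ)^2) * ‖fc f n‖^2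

/-- the `H¹(S¹)`-norm -/
def H1normC (f : ℂ → ℂ) : ℝ := Real.sqrt (H1SqC f)

/-- membership in the Sobolev space `H¹(S¹)` -/
def MemH1C (f : ℂ → ℂ) : Prop :=
  MemL2C f ∧ Summable (fun n : ℤ => (1 + (n : ℝ)^2) * ‖fc f n‖^2)

/-- membership in `H̃₊¹(S¹) = H¹(S¹) ∩ H̃₊(S¹)` -/
def MemH1plusC (f : ℂ → ℂ) : Prop := MemH1C f ∧ ∀ n : ℤ, n < 0 → fc f n = 0

/-- equality almost everywhere on the circle -/
def AEEqC (f g : ℂ → ℂ) : Prop := ∀ᵐ θ ∂circleMeasure, onCircle f θ = onCircle g θ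

/-- the Hardy projection `Π₊` on the circle -/
def PiPlusC (f : ℂ → ℂ) (w : ℂ) : ℂ := ∑' n : ℕ, fc f ((n : ℤ) + 1) * w ^ (n + 1)

/-- the Hardy projection `Π₋` on the circle -/
def PiMinusC (f : ℂ → ℂ) (w : ℂ) : ℂ := ∑' n : ℕ, fc f (-(n : ℤ) - 1) * w ^ (-(n : ℤ) - 1)

/-- the normalizing factor `(1+|c|²)^{-1/2}` -/
def dfac (c : ℂ) : ℂ := (((1 + ‖c‖^2) ^ (-(1/2) : ℝ) : ℝ) : ℂ)

/-- The `+` family: recursion downwards in `j` together with normalization at `+∞`. -/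
def PlusFamily (γ : ℤ → ℂ) (A B : ℤ → ℂ → ℂ) : Prop :=
  (∀ j : ℤ, ∀ w : ℂ, ‖w‖ = 1 →
    A j w = dfac (γ j) * (A (j + 1) w - γ j * w⁻¹ * B (j + 1) w) ∧
    B j w = dfac (γ j) * (conj (γ j) * A (j + 1) w + w⁻¹ * B (j + 1) w)) ∧
  (∀ w : ℂ, ‖w‖ = 1 →
    Tendsto (fun j : ℤ => A j w) atTop (𝓝 1) ∧ Tendsto (fun j : ℤ => B j w) atTop (𝓝 0))

/-- The `-` family: recursion upwards in `j` together with normalization at `-∞`. -/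
def MinusFamily (γ : ℤ → ℂ) (A B : ℤ → ℂ → ℂ) : Prop :=
  (∀ j : ℤ, ∀ w : ℂ, ‖w‖ = 1 →
    A (j + 1) w = dfac (γ j) * (A j w + γ j * B j w) ∧
    B (j + 1) w = dfac (γ j) * (-(conj (γ j)) * w * A j w + w * B j w)) ∧
  (∀ w : ℂ, ‖w‖ = 1 →
    Tendsto (fun j : ℤ => A j w) atBot (𝓝 1) ∧ Tendsto (fun j : ℤ => B j w) atBot (𝓝 0))

/-!
On the unit circle both transfer matrices are unitary, and each moves `e₁ = (1, 0)` by at most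
`2|γ_j|`. Hence the products `T_j T_{j+1} ⋯ T_{j+n-1} e₁` are Cauchy in `n`, and their limit
solves the recursion and lies within the tail `∑_{k ≥ j} 2|γ_k|` of `e₁`. Two solutions differ
by a vector whose length is independent of `j` and tends to `0`, so they agree. The `-` family
is the same problem after the reflection `j ↦ -j`.

The finite products are polynomials in `w` (for the `+` family after conjugation, since
`w⁻¹ = w̄` on the circle) and converge uniformly on the circle, so the limits inherit the
vanishing of the negative Fourier coefficients.
-/

section TransferRecursion

variable {R E : Type*} [Semiring R] [NormedAddCommGroup E] [Module R E]

def transferProd (T : ℤ → E →ₗ[R] E) (e : E) : ℕ → ℤ → E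
  | 0, _ => e
  | n + 1, j => T j (transferProd T e n (j + 1))

def transferLimit (T : ℤ → E →ₗ[R] E) (e : E) (j : ℤ) : E :=
  limUnder atTop fun n => transferProd T e n j

def IsTransferSolution (T : ℤ → E →ₗ[R] E) (e : E) (X : ℤ → E) : Prop :=
  (∀ j, X j = T j (X (j + 1))) ∧ Tendsto X atTop (𝓝 e)

def tailSum (ε : ℤ → ℝ) (j : ℤ) : ℝ := ∑' i : ℕ, ε (j + i)

lemma summable_comp_add_natCast {ε : ℤ → ℝ} (hε : Summable ε) (j : ℤ) :
    Summable fun i : ℕ => ε (j + i) :=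
  hε.comp_injective fun _ _ h => by simpa using h

lemma tendsto_tailSum_atTop (ε : ℤ → ℝ) : Tendsto (tailSum ε) atTop (𝓝 0) := by
  rw [← Nat.map_cast_int_atTop, tendsto_map'_iff]
  simpa [Function.comp_def, tailSum, add_comm] using tendsto_sum_nat_add fun k : ℕ => ε k

lemma tendsto_tailSum_add_natCast (ε : ℤ → ℝ) (j : ℤ) :
    Tendsto (fun n : ℕ => tailSum ε (j + n)) atTop (𝓝 0) :=
  (tendsto_tailSum_atTop ε).comp (tendsto_atTop_add_const_left _ j tendsto_natCast_atTop_atTop)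

variable {T : ℤ → E →ₗ[R] E} {e : E} {ε : ℤ → ℝ}

lemma dist_transferProd_succ_le (hT : ∀ j x, ‖T j x‖ = ‖x‖) (hTe : ∀ j, ‖T j e - e‖ ≤ ε j)
    (n : ℕ) (j : ℤ) : dist (transferProd T e n j) (transferProd T e (n + 1) j) ≤ ε (j + n) := by
  induction n generalizing j with
  | zero => simpa [transferProd, dist_eq_norm'] using hTe j
  | succ n ih =>
    rw [dist_eq_norm, transferProd, transferProd, ← map_sub, hT, ← dist_eq_norm]
    convert ih (j + 1) using 2
    push_cast; ring

lemma norm_sub_eq_of_recursion (hT : ∀ j x, ‖T j x‖ = ‖x‖) {X Y : ℤ → E}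
    (hX : ∀ j, X j = T j (X (j + 1))) (hY : ∀ j, Y j = T j (Y (j + 1))) {j k : ℤ}
    (hjk : j ≤ k) : ‖X k - Y k‖ = ‖X j - Y j‖ := by
  induction k, hjk using Int.leInduction with
  | base => rfl
  | succ k _ ih => rw [← ih, hX k, hY k, ← map_sub, hT]

lemma IsTransferSolution.unique (hT : ∀ j x, ‖T j x‖ = ‖x‖) {X Y : ℤ → E}
    (hX : IsTransferSolution T e X) (hY : IsTransferSolution T e Y) : X = Y := by
  funext j
  have hlim : Tendsto (fun k => ‖X k - Y k‖) atTop (𝓝 0) := by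
    simpa using (hX.2.sub hY.2).norm
  have hconst : Tendsto (fun k => ‖X k - Y k‖) atTop (𝓝 ‖X j - Y j‖) :=
    tendsto_const_nhds.congr' <| (eventually_ge_atTop j).mono fun k hk =>
      (norm_sub_eq_of_recursion hT hX.1 hY.1 hk).symm
  exact sub_eq_zero.1 (norm_eq_zero.1 (tendsto_nhds_unique hconst hlim))

variable [CompleteSpace E]

lemma tendsto_transferProd (hT : ∀ j x, ‖T j x‖ = ‖x‖) (hTe : ∀ j, ‖T j e - e‖ ≤ ε j)
    (hε : Summable ε) (j : ℤ) :
    Tendsto (fun n => transferProd T e n j) atTop (𝓝 (transferLimit T e j)) :=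
  (cauchySeq_of_dist_le_of_summable _ (dist_transferProd_succ_le hT hTe · j)
    (summable_comp_add_natCast hε j)).tendsto_limUnder

lemma dist_transferProd_transferLimit_le (hT : ∀ j x, ‖T j x‖ = ‖x‖)
    (hTe : ∀ j, ‖T j e - e‖ ≤ ε j) (hε : Summable ε) (n : ℕ) (j : ℤ) :
    dist (transferProd T e n j) (transferLimit T e j) ≤ tailSum ε (j + n) := by
  have := dist_le_tsum_of_dist_le_of_tendsto _ (dist_transferProd_succ_le hT hTe · j)
    (summable_comp_add_natCast hε j) (tendsto_transferProd hT hTe hε j) n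
  simpa [tailSum, add_assoc] using this

lemma transferLimit_eq (hT : ∀ j x, ‖T j x‖ = ‖x‖) (hTe : ∀ j, ‖T j e - e‖ ≤ ε j)
    (hε : Summable ε) (j : ℤ) : transferLimit T e j = T j (transferLimit T e (j + 1)) := by
  have hcont : Continuous (T j) := (AddMonoidHomClass.isometry_of_norm _ (hT j)).continuous
  refine tendsto_nhds_unique ((tendsto_transferProd hT hTe hε j).comp (tendsto_add_atTop_nat 1)) ?_
  exact (hcont.tendsto _).comp (tendsto_transferProd hT hTe hε (j + 1))

lemma isTransferSolution_transferLimit (hT : ∀ j x, ‖T j x‖ = ‖x‖)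
    (hTe : ∀ j, ‖T j e - e‖ ≤ ε j) (hε : Summable ε) :
    IsTransferSolution T e (transferLimit T e) := by
  refine ⟨transferLimit_eq hT hTe hε, tendsto_iff_dist_tendsto_zero.2 ?_⟩
  refine squeeze_zero (fun _ => dist_nonneg) (fun j => ?_) (tendsto_tailSum_atTop ε)
  simpa [dist_comm, transferProd] using dist_transferProd_transferLimit_le hT hTe hε 0 j

end TransferRecursion

local notation "ℂ²" => EuclideanSpace ℂ (Fin 2)

section TransferSteps

lemma dfac_eq_inv_sqrt (c : ℂ) : dfac c = ((√(1 + ‖c‖ ^ 2))⁻¹ : ℝ) := by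
  rw [dfac, Real.sqrt_eq_rpow, Real.rpow_neg (by positivity)]

lemma conj_dfac (c : ℂ) : conj (dfac c) = dfac c := Complex.conj_ofReal _

lemma dfac_sq_mul (c : ℂ) : dfac c ^ 2 * (1 + c * conj c) = 1 := by
  have hs : √(1 + ‖c‖ ^ 2) ^ 2 = 1 + ‖c‖ ^ 2 := Real.sq_sqrt (by positivity)
  have hpos : 0 < √(1 + ‖c‖ ^ 2) := Real.sqrt_pos.2 (by positivity)
  rw [Complex.mul_conj', dfac_eq_inv_sqrt]
  exact_mod_cast (by field_simp; linarith : (√(1 + ‖c‖ ^ 2))⁻¹ ^ 2 * (1 + ‖c‖ ^ 2) = 1)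

lemma norm_dfac_le_one (c : ℂ) : ‖dfac c‖ ≤ 1 := by
  rw [dfac_eq_inv_sqrt, Complex.norm_real, norm_inv, Real.norm_eq_abs,
    abs_of_nonneg (Real.sqrt_nonneg _)]
  exact inv_le_one_of_one_le₀ (Real.one_le_sqrt.2 (by nlinarith [norm_nonneg c]))

/-- With `s = √(1 + ‖c‖²) ∈ [1, 1 + ‖c‖]`: `1 - s⁻¹ ≤ s - 1 ≤ ‖c‖`. -/
lemma norm_dfac_sub_one_le (c : ℂ) : ‖dfac c - 1‖ ≤ ‖c‖ := by
  set s := √(1 + ‖c‖ ^ 2)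
  have hs1 : 1 ≤ s := Real.one_le_sqrt.2 (by nlinarith [norm_nonneg c])
  have hsc : s ≤ 1 + ‖c‖ :=
    Real.sqrt_le_iff.2 ⟨by positivity, by nlinarith [norm_nonneg c]⟩
  rw [dfac_eq_inv_sqrt, ← Complex.ofReal_one, ← Complex.ofReal_sub, Complex.norm_real,
    Real.norm_eq_abs, abs_sub_comm, abs_of_nonneg (sub_nonneg.2 (inv_le_one_of_one_le₀ hs1))]
  have : 1 - s⁻¹ ≤ s - 1 := by
    rw [sub_le_iff_le_add, ← sub_le_iff_le_add']
    nlinarith [inv_le_one_of_one_le₀ hs1, mul_inv_cancel₀ (by linarith : s ≠ 0)]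
  linarith

lemma ofReal_norm_sq_eq (x : ℂ²) :
    ((‖x‖ ^ 2 : ℝ) : ℂ) = x 0 * conj (x 0) + x 1 * conj (x 1) := by
  rw [EuclideanSpace.norm_sq_eq, Fin.sum_univ_two]
  push_cast
  simp [Complex.mul_conj']

lemma norm_eq_of_normSq_eq {x y : ℂ²}
    (h : y 0 * conj (y 0) + y 1 * conj (y 1) = x 0 * conj (x 0) + x 1 * conj (x 1)) :
    ‖y‖ = ‖x‖ := by
  rw [← ofReal_norm_sq_eq, ← ofReal_norm_sq_eq, Complex.ofReal_inj] at h
  exact (pow_left_inj₀ (norm_nonneg _) (norm_nonneg _) two_ne_zero).1 h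

lemma norm_toLp_le (a b : ℂ) : ‖!₂[a, b]‖ ≤ ‖a‖ + ‖b‖ := by
  rw [EuclideanSpace.norm_eq, Fin.sum_univ_two]
  refine Real.sqrt_le_iff.2 ⟨by positivity, ?_⟩
  simp only [Matrix.cons_val_zero, Matrix.cons_val_one]
  nlinarith [norm_nonneg a, norm_nonneg b]

def plusStep (c w : ℂ) : ℂ² →ₗ[ℂ] ℂ² :=
  Matrix.toEuclideanLin (dfac c • !![1, -c * w⁻¹; conj c, w⁻¹])

def minusStep (c w : ℂ) : ℂ² →ₗ[ℂ] ℂ² :=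
  Matrix.toEuclideanLin (dfac c • !![1, c; -conj c * w, w])

lemma plusStep_apply (c w : ℂ) (x : ℂ²) :
    plusStep c w x = !₂[dfac c * (x 0 - c * w⁻¹ * x 1), dfac c * (conj c * x 0 + w⁻¹ * x 1)] := by
  ext i; fin_cases i <;> simp [plusStep, Matrix.vecHead, Matrix.vecTail] <;> ring

lemma minusStep_apply (c w : ℂ) (x : ℂ²) :
    minusStep c w x = !₂[dfac c * (x 0 + c * x 1), dfac c * (-conj c * w * x 0 + w * x 1)] := by
  ext i; fin_cases i <;> simp [minusStep, Matrix.vecHead, Matrix.vecTail] <;> ring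

lemma norm_plusStep_sub_le (c w : ℂ) :
    ‖plusStep c w !₂[1, 0] - !₂[1, 0]‖ ≤ 2 * ‖c‖ := by
  have : plusStep c w !₂[1, 0] - !₂[1, 0] = !₂[dfac c - 1, dfac c * conj c] := by
    ext i; fin_cases i <;> simp [plusStep_apply]
  rw [this]
  refine (norm_toLp_le _ _).trans ?_
  rw [norm_mul, RCLike.norm_conj]
  nlinarith [norm_dfac_sub_one_le c, norm_dfac_le_one c, norm_nonneg c]

variable {w : ℂ}

lemma mul_conj_of_norm_eq_one (hw : ‖w‖ = 1) : w * conj w = 1 := by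
  rw [Complex.mul_conj', hw]; simp

lemma norm_plusStep (c : ℂ) (hw : ‖w‖ = 1) (x : ℂ²) : ‖plusStep c w x‖ = ‖x‖ := by
  refine norm_eq_of_normSq_eq ?_
  simp only [plusStep_apply, WithLp.ofLp_toLp, Matrix.cons_val_zero, Matrix.cons_val_one,
    map_mul, map_add, map_sub, conj_dfac, Complex.conj_conj, Complex.inv_eq_conj hw]
  linear_combination (x 0 * conj (x 0) + x 1 * conj (x 1)) * dfac_sq_mul c +
    (dfac c ^ 2 * (1 + c * conj c) * x 1 * conj (x 1)) * mul_conj_of_norm_eq_one hw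

lemma norm_minusStep (c : ℂ) (hw : ‖w‖ = 1) (x : ℂ²) : ‖minusStep c w x‖ = ‖x‖ := by
  refine norm_eq_of_normSq_eq ?_
  simp only [minusStep_apply, WithLp.ofLp_toLp, Matrix.cons_val_zero, Matrix.cons_val_one,
    map_mul, map_add, map_neg, conj_dfac, Complex.conj_conj]
  linear_combination (x 0 * conj (x 0) + x 1 * conj (x 1)) * dfac_sq_mul c +
    (dfac c ^ 2 * (c * conj c * x 0 * conj (x 0) + x 1 * conj (x 1)
      - conj c * x 0 * conj (x 1) - c * x 1 * conj (x 0))) * mul_conj_of_norm_eq_one hw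

lemma norm_minusStep_sub_le (c : ℂ) (hw : ‖w‖ = 1) :
    ‖minusStep c w !₂[1, 0] - !₂[1, 0]‖ ≤ 2 * ‖c‖ := by
  have : minusStep c w !₂[1, 0] - !₂[1, 0] = !₂[dfac c - 1, -dfac c * conj c * w] := by
    ext i; fin_cases i <;> simp [minusStep_apply]; ring
  rw [this]
  refine (norm_toLp_le _ _).trans ?_
  rw [norm_mul, norm_mul, norm_neg, RCLike.norm_conj, hw]
  nlinarith [norm_dfac_sub_one_le c, norm_dfac_le_one c, norm_nonneg c]

end TransferSteps

section Families

lemma toLp_pair_eta (x : ℂ²) : !₂[x 0, x 1] = x := by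
  ext i; fin_cases i <;> rfl

lemma toLp_pair_inj {a b c d : ℂ} : !₂[a, b] = !₂[c, d] ↔ a = c ∧ b = d := by
  simp

lemma tendsto_toLp_pair_iff {ι : Type*} {l : Filter ι} {a b : ι → ℂ} {x y : ℂ} :
    Tendsto (fun i => !₂[a i, b i]) l (𝓝 !₂[x, y]) ↔ Tendsto a l (𝓝 x) ∧ Tendsto b l (𝓝 y) := by
  constructor
  · intro h
    exact ⟨by simpa [Function.comp_def] using ((PiLp.continuous_apply 2 _ 0).tendsto _).comp h,
      by simpa [Function.comp_def] using ((PiLp.continuous_apply 2 _ 1).tendsto _).comp h⟩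
  · rintro ⟨ha, hb⟩
    refine ((PiLp.continuous_toLp 2 _).tendsto _).comp (tendsto_pi_nhds.2 ?_)
    exact Fin.forall_fin_two.2 ⟨ha, hb⟩

def plusTransfer (γ : ℤ → ℂ) (w : ℂ) (j : ℤ) : ℂ² →ₗ[ℂ] ℂ² := plusStep (γ j) w

/-- Indexed by `k = -j`, so that the `-` recursion also runs downwards (see `minusFamily_iff`). -/
def minusTransfer (γ : ℤ → ℂ) (w : ℂ) (k : ℤ) : ℂ² →ₗ[ℂ] ℂ² := minusStep (γ (-(k + 1))) w

variable {γ : ℤ → ℂ} {A B : ℤ → ℂ → ℂ}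

lemma plusFamily_iff : PlusFamily γ A B ↔ ∀ w : ℂ, ‖w‖ = 1 →
    IsTransferSolution (plusTransfer γ w) !₂[1, 0] (fun j => !₂[A j w, B j w]) := by
  simp only [PlusFamily, IsTransferSolution, plusTransfer, plusStep_apply, toLp_pair_inj,
    tendsto_toLp_pair_iff, Matrix.cons_val_zero, Matrix.cons_val_one]
  exact ⟨fun h w hw => ⟨fun j => h.1 j w hw, h.2 w hw⟩,
    fun h => ⟨fun j w hw => (h w hw).1 j, fun w hw => (h w hw).2⟩⟩

lemma minusFamily_iff : MinusFamily γ A B ↔ ∀ w : ℂ, ‖w‖ = 1 →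
    IsTransferSolution (minusTransfer γ w) !₂[1, 0]
      (fun k => !₂[A (-k) w, B (-k) w]) := by
  have hbot {f : ℤ → ℂ} {a : ℂ} :
      Tendsto (fun k => f (-k)) atTop (𝓝 a) ↔ Tendsto f atBot (𝓝 a) := by
    rw [← map_neg_atTop, tendsto_map'_iff, Function.comp_def]
  simp only [MinusFamily, IsTransferSolution, minusTransfer, minusStep_apply, toLp_pair_inj,
    tendsto_toLp_pair_iff, Matrix.cons_val_zero, Matrix.cons_val_one]
  refine ⟨fun h w hw => ⟨fun k => ?_, (h.2 w hw).imp hbot.2 hbot.2⟩,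
    fun h => ⟨fun j w hw => ?_, fun w hw => (h w hw).2.imp hbot.1 hbot.1⟩⟩
  · simpa using h.1 (-(k + 1)) w hw
  · simpa using (h w hw).1 (-(j + 1))

end Families

section Solutions

def plusSolution (γ : ℤ → ℂ) (w : ℂ) : ℤ → ℂ² :=
  transferLimit (plusTransfer γ w) !₂[1, 0]

def minusSolution (γ : ℤ → ℂ) (w : ℂ) : ℤ → ℂ² :=
  transferLimit (minusTransfer γ w) !₂[1, 0]

variable {γ : ℤ → ℂ} {w : ℂ}

lemma summable_norm_comp_neg_succ (hγ : Summable fun j => ‖γ j‖) :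
    Summable fun k => 2 * ‖γ (-(k + 1))‖ :=
  (hγ.comp_injective fun _ _ h => by simpa using h).mul_left 2

lemma isTransferSolution_plusSolution (hγ : Summable fun j => ‖γ j‖) (hw : ‖w‖ = 1) :
    IsTransferSolution (plusTransfer γ w) !₂[1, 0] (plusSolution γ w) :=
  isTransferSolution_transferLimit (fun j => norm_plusStep (γ j) hw)
    (fun j => norm_plusStep_sub_le (γ j) w) (hγ.mul_left 2)

lemma isTransferSolution_minusSolution (hγ : Summable fun j => ‖γ j‖) (hw : ‖w‖ = 1) :
    IsTransferSolution (minusTransfer γ w) !₂[1, 0] (minusSolution γ w) :=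
  isTransferSolution_transferLimit (fun k => norm_minusStep (γ (-(k + 1))) hw)
    (fun k => norm_minusStep_sub_le (γ (-(k + 1))) hw) (summable_norm_comp_neg_succ hγ)

lemma dist_transferProd_plusSolution_le (hγ : Summable fun j => ‖γ j‖) (hw : ‖w‖ = 1)
    (n : ℕ) (j : ℤ) :
    dist (transferProd (plusTransfer γ w) !₂[1, 0] n j) (plusSolution γ w j) ≤
      tailSum (fun k => 2 * ‖γ k‖) (j + n) :=
  dist_transferProd_transferLimit_le (fun j => norm_plusStep (γ j) hw)
    (fun j => norm_plusStep_sub_le (γ j) w) (hγ.mul_left 2) n j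

lemma dist_transferProd_minusSolution_le (hγ : Summable fun j => ‖γ j‖) (hw : ‖w‖ = 1)
    (n : ℕ) (k : ℤ) :
    dist (transferProd (minusTransfer γ w) !₂[1, 0] n k) (minusSolution γ w k) ≤
      tailSum (fun k => 2 * ‖γ (-(k + 1))‖) (k + n) :=
  dist_transferProd_transferLimit_le (fun k => norm_minusStep (γ (-(k + 1))) hw)
    (fun k => norm_minusStep_sub_le (γ (-(k + 1))) hw) (summable_norm_comp_neg_succ hγ) n k

end Solutions

section Hardy

instance : IsFiniteMeasure circleMeasure := by
  rw [circleMeasure]; infer_instance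

def IsPolyOnCircle (f : ℂ → ℂ) : Prop :=
  ∃ p : Polynomial ℂ, ∀ w : ℂ, ‖w‖ = 1 → f w = p.eval w

lemma integral_exp_int_mul_I_eq_zero {k : ℤ} (hk : k ≠ 0) :
    ∫ θ in (0 : ℝ)..(2 * Real.pi), Complex.exp (k * Complex.I * θ) = 0 := by
  have hc : (k : ℂ) * Complex.I ≠ 0 := mul_ne_zero (Int.cast_ne_zero.2 hk) Complex.I_ne_zero
  have h2π : (k : ℂ) * Complex.I * ((2 * Real.pi : ℝ) : ℂ) = k * (2 * Real.pi * Complex.I) := by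
    push_cast; ring
  rw [integral_exp_mul_complex hc, h2π, Complex.exp_int_mul_two_pi_mul_I]
  simp

namespace IsPolyOnCircle

variable {f g : ℂ → ℂ}

lemma const (a : ℂ) : IsPolyOnCircle fun _ => a := ⟨Polynomial.C a, by simp⟩

lemma congr (hf : IsPolyOnCircle f) (h : ∀ w : ℂ, ‖w‖ = 1 → g w = f w) : IsPolyOnCircle g :=
  let ⟨p, hp⟩ := hf; ⟨p, fun w hw => (h w hw).trans (hp w hw)⟩

lemma add (hf : IsPolyOnCircle f) (hg : IsPolyOnCircle g) : IsPolyOnCircle fun w => f w + g w :=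
  let ⟨p, hp⟩ := hf; let ⟨q, hq⟩ := hg; ⟨p + q, fun w hw => by simp [hp w hw, hq w hw]⟩

lemma const_mul (a : ℂ) (hf : IsPolyOnCircle f) : IsPolyOnCircle fun w => a * f w :=
  let ⟨p, hp⟩ := hf; ⟨Polynomial.C a * p, fun w hw => by simp [hp w hw]⟩

lemma id_mul (hf : IsPolyOnCircle f) : IsPolyOnCircle fun w => w * f w :=
  let ⟨p, hp⟩ := hf; ⟨Polynomial.X * p, fun w hw => by simp [hp w hw]⟩

lemma continuous_onCircle (hf : IsPolyOnCircle f) : Continuous (onCircle f) := by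
  obtain ⟨p, hp⟩ := hf
  have : onCircle f = fun θ : ℝ => p.eval (Complex.exp (θ * Complex.I)) :=
    funext fun θ => hp _ (Complex.norm_exp_ofReal_mul_I θ)
  rw [this]
  fun_prop

lemma fc_eq_zero (hf : IsPolyOnCircle f) {m : ℤ} (hm : m < 0) : fc f m = 0 := by
  obtain ⟨p, hp⟩ := hf
  have hterm (θ : ℝ) : onCircle f θ * Complex.exp (-(m * θ) * Complex.I) =
      ∑ i ∈ Finset.range (p.natDegree + 1),
        p.coeff i * Complex.exp ((((i - m : ℤ) : ℂ) * Complex.I) * θ) := by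
    rw [onCircle, hp _ (Complex.norm_exp_ofReal_mul_I θ), Polynomial.eval_eq_sum_range,
      Finset.sum_mul]
    refine Finset.sum_congr rfl fun i _ => ?_
    rw [← Complex.exp_nat_mul, mul_assoc, ← Complex.exp_add]
    push_cast
    ring_nf
  rw [fc, intervalIntegral.integral_congr fun θ _ => hterm θ,
    intervalIntegral.integral_finsetSum fun i _ =>
      (by fun_prop : Continuous _).intervalIntegrable _ _]
  rw [Finset.sum_eq_zero fun i _ => by
    rw [intervalIntegral.integral_const_mul,
      integral_exp_int_mul_I_eq_zero (show (i : ℤ) - m ≠ 0 by omega), mul_zero], smul_zero]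

end IsPolyOnCircle

lemma memL2C_of_continuous {f : ℂ → ℂ} (hf : Continuous (onCircle f)) : MemL2C f := by
  obtain ⟨C, hC⟩ :=
    (isCompact_Icc (a := 0) (b := 2 * Real.pi)).exists_bound_of_continuousOn hf.continuousOn
  refine MemLp.of_bound hf.aestronglyMeasurable C ?_
  rw [circleMeasure, ae_restrict_iff' measurableSet_Ioc]
  exact Eventually.of_forall fun θ hθ => hC θ (Set.Ioc_subset_Icc_self hθ)

lemma norm_fc_sub_le {f g : ℂ → ℂ} {δ : ℝ} (hf : Continuous (onCircle f))
    (hg : Continuous (onCircle g)) (hfg : ∀ w : ℂ, ‖w‖ = 1 → ‖f w - g w‖ ≤ δ) (m : ℤ) :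
    ‖fc f m - fc g m‖ ≤ δ := by
  have hint {h : ℂ → ℂ} (hh : Continuous (onCircle h)) : IntervalIntegrable
      (fun θ : ℝ => onCircle h θ * Complex.exp (-(m * θ) * Complex.I)) volume 0 (2 * Real.pi) :=
    (hh.mul (by fun_prop)).intervalIntegrable _ _
  have hpointwise (θ : ℝ) :
      ‖(onCircle f θ - onCircle g θ) * Complex.exp (-(m * θ) * Complex.I)‖ ≤ δ := by
    have hexp : -((m : ℂ) * θ) * Complex.I = ((-(m * θ) : ℝ) : ℂ) * Complex.I := by
      push_cast; ring
    rw [norm_mul, hexp, Complex.norm_exp_ofReal_mul_I, mul_one]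
    exact hfg _ (Complex.norm_exp_ofReal_mul_I θ)
  rw [fc, fc, ← smul_sub, ← intervalIntegral.integral_sub (hint hf) (hint hg), norm_smul]
  simp_rw [← sub_mul]
  calc ‖(1 / (2 * Real.pi) : ℝ)‖ * ‖∫ θ in (0 : ℝ)..(2 * Real.pi),
        (onCircle f θ - onCircle g θ) * Complex.exp (-(m * θ) * Complex.I)‖
      ≤ (1 / (2 * Real.pi)) * (δ * |2 * Real.pi - 0|) := by
        rw [Real.norm_of_nonneg (by positivity)]
        gcongr
        exact intervalIntegral.norm_integral_le_of_norm_le_const fun θ _ => hpointwise θ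
    _ = δ := by
        rw [sub_zero, abs_of_pos Real.two_pi_pos]
        field_simp

lemma memHplusC_of_uniform_poly_approx {f : ℂ → ℂ} {g : ℕ → ℂ → ℂ} {δ : ℕ → ℝ}
    (hg : ∀ n, IsPolyOnCircle (g n)) (hδ : Tendsto δ atTop (𝓝 0))
    (hfg : ∀ n (w : ℂ), ‖w‖ = 1 → ‖f w - g n w‖ ≤ δ n) : MemHplusC f := by
  have hunif : TendstoUniformly (fun n => onCircle (g n)) (onCircle f) atTop := by
    refine Metric.tendstoUniformly_iff.2 fun r hr => ?_
    filter_upwards [hδ.eventually (eventually_lt_nhds hr)] with n hn θ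
    rw [dist_eq_norm]
    exact (hfg n _ (Complex.norm_exp_ofReal_mul_I θ)).trans_lt hn
  have hcont : Continuous (onCircle f) :=
    hunif.continuous (Eventually.of_forall fun n => (hg n).continuous_onCircle).frequently
  refine ⟨memL2C_of_continuous hcont, fun m hm => norm_le_zero_iff.1 ?_⟩
  refine ge_of_tendsto' hδ fun n => ?_
  simpa [(hg n).fc_eq_zero hm] using
    norm_fc_sub_le hcont (hg n).continuous_onCircle (hfg n) m

end Hardy

section Main

variable {γ : ℤ → ℂ}

lemma norm_apply_sub_le_dist (x y : ℂ²) (i : Fin 2) : ‖x i - y i‖ ≤ dist x y := by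
  simpa [dist_eq_norm] using PiLp.norm_apply_le (x - y) i

lemma isPolyOnCircle_conj_transferProd_plus (γ : ℤ → ℂ) (n : ℕ) (j : ℤ) (i : Fin 2) :
    IsPolyOnCircle fun w => conj (transferProd (plusTransfer γ w) !₂[1, 0] n j i) := by
  induction n generalizing j i with
  | zero => fin_cases i <;> simpa [transferProd] using IsPolyOnCircle.const _
  | succ n ih =>
    have h0 := ih (j + 1) 0
    have h1 := ih (j + 1) 1
    fin_cases i
    · refine ((h0.const_mul (dfac (γ j))).add
        (h1.id_mul.const_mul (-(dfac (γ j) * conj (γ j))))).congr fun w hw => ?_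
      simp [transferProd, plusTransfer, plusStep_apply, Complex.inv_eq_conj hw, conj_dfac]
      ring
    · refine ((h0.const_mul (dfac (γ j) * γ j)).add
        (h1.id_mul.const_mul (dfac (γ j)))).congr fun w hw => ?_
      simp [transferProd, plusTransfer, plusStep_apply, Complex.inv_eq_conj hw, conj_dfac]
      ring

lemma isPolyOnCircle_transferProd_minus (γ : ℤ → ℂ) (n : ℕ) (k : ℤ) :
    IsPolyOnCircle (fun w => transferProd (minusTransfer γ w) !₂[1, 0] n k 0) ∧
    IsPolyOnCircle (fun w => w⁻¹ * transferProd (minusTransfer γ w) !₂[1, 0] n k 1) := by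
  induction n generalizing k with
  | zero => exact ⟨by simpa [transferProd] using IsPolyOnCircle.const 1,
      by simpa [transferProd] using IsPolyOnCircle.const 0⟩
  | succ n ih =>
    obtain ⟨h0, h1⟩ := ih (k + 1)
    have hw0 {w : ℂ} (hw : ‖w‖ = 1) : w ≠ 0 := by rintro rfl; simp at hw
    constructor
    · refine ((h0.const_mul (dfac (γ (-(k + 1))))).add
        (h1.id_mul.const_mul (dfac (γ (-(k + 1))) * γ (-(k + 1))))).congr fun w hw => ?_
      simp only [transferProd, minusTransfer, minusStep_apply, WithLp.ofLp_toLp,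
        Matrix.cons_val_zero]
      field_simp [hw0 hw]
    · refine ((h0.const_mul (-(dfac (γ (-(k + 1))) * conj (γ (-(k + 1)))))).add
        (h1.id_mul.const_mul (dfac (γ (-(k + 1)))))).congr fun w hw => ?_
      simp only [transferProd, minusTransfer, minusStep_apply, WithLp.ofLp_toLp,
        Matrix.cons_val_zero, Matrix.cons_val_one]
      field_simp [hw0 hw]

lemma memHplusC_conj_plusSolution (hγ : Summable fun j => ‖γ j‖) (j : ℤ) (i : Fin 2) :
    MemHplusC fun w => conj (plusSolution γ w j i) := by
  refine memHplusC_of_uniform_poly_approx (isPolyOnCircle_conj_transferProd_plus γ · j i)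
    (tendsto_tailSum_add_natCast (fun k => 2 * ‖γ k‖) j) fun n w hw => ?_
  rw [← map_sub, RCLike.norm_conj]
  exact (norm_apply_sub_le_dist _ _ i).trans
    ((dist_comm _ _).trans_le (dist_transferProd_plusSolution_le hγ hw n j))

lemma memHplusC_minusSolution (hγ : Summable fun j => ‖γ j‖) (k : ℤ) :
    MemHplusC (fun w => minusSolution γ w k 0) ∧
      MemHplusC (fun w => w⁻¹ * minusSolution γ w k 1) := by
  have happrox {w : ℂ} (hw : ‖w‖ = 1) (n : ℕ) (i : Fin 2) := (norm_apply_sub_le_dist _ _ i).trans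
    ((dist_comm _ _).trans_le (dist_transferProd_minusSolution_le hγ hw n k))
  refine ⟨memHplusC_of_uniform_poly_approx (isPolyOnCircle_transferProd_minus γ · k |>.1)
    (tendsto_tailSum_add_natCast (fun k => 2 * ‖γ (-(k + 1))‖) k) fun n w hw => happrox hw n 0,
    memHplusC_of_uniform_poly_approx (isPolyOnCircle_transferProd_minus γ · k |>.2)
    (tendsto_tailSum_add_natCast (fun k => 2 * ‖γ (-(k + 1))‖) k) fun n w hw => ?_⟩
  rw [← mul_sub, norm_mul, norm_inv, hw, inv_one, one_mul]
  exact happrox hw n 1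

lemma plusFamily_plusSolution (hγ : Summable fun j => ‖γ j‖) :
    PlusFamily γ (fun j w => plusSolution γ w j 0) (fun j w => plusSolution γ w j 1) :=
  plusFamily_iff.2 fun _ hw => by
    simpa only [toLp_pair_eta] using isTransferSolution_plusSolution hγ hw

lemma minusFamily_minusSolution (hγ : Summable fun j => ‖γ j‖) :
    MinusFamily γ (fun j w => minusSolution γ w (-j) 0) (fun j w => minusSolution γ w (-j) 1) :=
  minusFamily_iff.2 fun _ hw => by
    simpa only [neg_neg, toLp_pair_eta] using isTransferSolution_minusSolution hγ hw

lemma PlusFamily.eq_plusSolution {A B : ℤ → ℂ → ℂ} (h : PlusFamily γ A B)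
    (hγ : Summable fun j => ‖γ j‖) (j : ℤ) {w : ℂ} (hw : ‖w‖ = 1) :
    A j w = plusSolution γ w j 0 ∧ B j w = plusSolution γ w j 1 := by
  have := (plusFamily_iff.1 h w hw).unique (fun k => norm_plusStep (γ k) hw)
    (isTransferSolution_plusSolution hγ hw)
  rw [← toLp_pair_inj, congrFun this j, toLp_pair_eta]

lemma MinusFamily.eq_minusSolution {A B : ℤ → ℂ → ℂ} (h : MinusFamily γ A B)
    (hγ : Summable fun j => ‖γ j‖) (j : ℤ) {w : ℂ} (hw : ‖w‖ = 1) :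
    A j w = minusSolution γ w (-j) 0 ∧ B j w = minusSolution γ w (-j) 1 := by
  have := (minusFamily_iff.1 h w hw).unique (fun k => norm_minusStep (γ (-(k + 1))) hw)
    (isTransferSolution_minusSolution hγ hw)
  rw [← toLp_pair_inj, ← congrFun this (-j), toLp_pair_eta, neg_neg]

end Main

/-- forward discrete scattering. -/
theorem forward_discrete_scattering
    (γ : ℤ → ℂ) (hγ : Summable (fun j : ℤ => ‖γ j‖)) :
    ∃ Ap Bp Am Bm : ℤ → ℂ → ℂ,
      PlusFamily γ Ap Bp ∧ MinusFamily γ Am Bm ∧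
      (∀ Ap' Bp' : ℤ → ℂ → ℂ, PlusFamily γ Ap' Bp' →
        ∀ j : ℤ, ∀ w : ℂ, ‖w‖ = 1 → Ap' j w = Ap j w ∧ Bp' j w = Bp j w) ∧
      (∀ Am' Bm' : ℤ → ℂ → ℂ, MinusFamily γ Am' Bm' →
        ∀ j : ℤ, ∀ w : ℂ, ‖w‖ = 1 → Am' j w = Am j w ∧ Bm' j w = Bm j w) ∧
      (∀ j : ℤ,
        MemHplusC (Am j) ∧
        MemHplusC (fun w => w⁻¹ * Bm j w) ∧
        MemHplusC (fun w => conj (Ap j w)) ∧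
        MemHplusC (fun w => conj (Bp j w))) :=
  ⟨_, _, _, _, plusFamily_plusSolution hγ, minusFamily_minusSolution hγ,
    fun _ _ h j _ hw => h.eq_plusSolution hγ j hw,
    fun _ _ h j _ hw => h.eq_minusSolution hγ j hw,
    fun j => ⟨(memHplusC_minusSolution hγ (-j)).1, (memHplusC_minusSolution hγ (-j)).2,
      memHplusC_conj_plusSolution hγ j 0, memHplusC_conj_plusSolution hγ j 1⟩⟩
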